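/- Suppose v_1, ..., v_{2g+1} and w_1, ..., w_{2g+1} are two families of nonzero vectors in (Z/2Z)^{2g} each satisfying (x_i, x_j) = 1 for all i ≠ j. Then there is a linear automorphism A of (Z/2Z)^{2g} preserving the symplectic pairing with A v_i = w_i for all i. -/

import Mathlib

/-!
Pairing `∑ i, c i • u i` with `u j` gives `∑ i, c i - c j` when the `u i` pair to `1` with each
other and to `0` with themselves. Pairing also with the last vector forces every coefficient of a
vanishing combination of the first `2g` vectors to be `0`, so they form a basis; reading off the
coordinates of the last vector in that basis shows that it is minus (in characteristic two: plus)
their sum. Two such families therefore have bases with the same Gram matrix, the linear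
equivalence matching the bases is an isometry, and it matches the last vectors as well.
-/

/-- The standard symplectic pairing on `(ℤ/2ℤ)^{2g}`: coordinates `2k` and `2k+1`
are paired for each `k < g`. -/
def sympPair (g : ℕ) (x y : Fin (2 * g) → ZMod 2) : ZMod 2 :=
  ∑ i : Fin g,
    (x ⟨2 * i.val, by have := i.isLt; omega⟩ * y ⟨2 * i.val + 1, by have := i.isLt; omega⟩ +
     x ⟨2 * i.val + 1, by have := i.isLt; omega⟩ * y ⟨2 * i.val, by have := i.isLt; omega⟩)

open LinearMap (BilinForm)
open Module

lemma sympPair_add_left (g : ℕ) (x x' y : Fin (2 * g) → ZMod 2) :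
    sympPair g (x + x') y = sympPair g x y + sympPair g x' y := by
  simp only [sympPair, ← Finset.sum_add_distrib, Pi.add_apply]
  exact Finset.sum_congr rfl fun _ _ => by ring

lemma sympPair_smul_left (g : ℕ) (c : ZMod 2) (x y : Fin (2 * g) → ZMod 2) :
    sympPair g (c • x) y = c • sympPair g x y := by
  simp only [sympPair, smul_eq_mul, Finset.mul_sum, Pi.smul_apply]
  exact Finset.sum_congr rfl fun _ _ => by ring

lemma sympPair_comm (g : ℕ) (x y : Fin (2 * g) → ZMod 2) :
    sympPair g x y = sympPair g y x :=
  Finset.sum_congr rfl fun _ _ => by ring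

lemma sympPair_self (g : ℕ) (x : Fin (2 * g) → ZMod 2) : sympPair g x x = 0 :=
  Finset.sum_eq_zero fun _ _ => by rw [mul_comm]; exact CharTwo.add_self_eq_zero _

def sympForm (g : ℕ) : BilinForm (ZMod 2) (Fin (2 * g) → ZMod 2) :=
  LinearMap.mk₂ (ZMod 2) (sympPair g) (sympPair_add_left g) (sympPair_smul_left g)
    (fun x y y' => by simp only [sympPair_comm g x, sympPair_add_left])
    (fun c x y => by simp only [sympPair_comm g x, sympPair_smul_left])

lemma sympForm_isAlt (g : ℕ) : (sympForm g).IsAlt :=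
  sympPair_self g

section PairwiseOne

variable {R M : Type*} [CommRing R] [AddCommGroup M] [Module R M] {B : BilinForm R M}
  {ι : Type*} [Fintype ι] [DecidableEq ι]

lemma apply_sum_smul_of_pairwise_eq_one (hB : B.IsAlt) {u : ι → M}
    (hu : ∀ i j, i ≠ j → B (u i) (u j) = 1) (c : ι → R) (j : ι) :
    B (∑ i, c i • u i) (u j) = ∑ i, c i - c j := by
  have hpair : ∀ i, B (u i) (u j) = if i = j then 0 else 1 := fun i => by
    split_ifs with h
    · exact h ▸ hB.self_eq_zero (u i)
    · exact hu i j h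
  simp only [map_sum, map_smul, LinearMap.sum_apply, LinearMap.smul_apply, hpair, smul_eq_mul,
    mul_ite, mul_zero, mul_one, Finset.sum_ite, Finset.sum_const_zero, zero_add,
    Finset.filter_ne', Finset.sum_erase_eq_sub (Finset.mem_univ j)]

lemma linearIndependent_of_pairwise_eq_one (hB : B.IsAlt) {u : ι → M}
    (hu : ∀ i j, i ≠ j → B (u i) (u j) = 1) {x : M} (hx : ∀ i, B (u i) x = 1) :
    LinearIndependent R u := by
  rw [Fintype.linearIndependent_iff]
  intro c hc j
  have hsum : ∑ i, c i = 0 := by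
    simpa [hx] using congrArg (B · x) hc
  simpa [hc, hsum] using apply_sum_smul_of_pairwise_eq_one hB hu c j

lemma eq_neg_sum_of_pairwise_eq_one (hB : B.IsAlt) (b : Basis ι R M)
    (hb : ∀ i j, i ≠ j → B (b i) (b j) = 1) (hcard : (Fintype.card ι : R) = 0) {x : M}
    (hx : ∀ j, B x (b j) = 1) : x = -∑ i, b i := by
  set c := b.repr x
  have hx_eq : x = ∑ i, c i • b i := (b.sum_repr x).symm
  have hc : ∀ j, ∑ i, c i - c j = 1 := fun j => by
    rw [← apply_sum_smul_of_pairwise_eq_one hB hb, ← hx_eq, hx]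
  have hsum : ∑ i, c i = 0 := by
    have := Finset.sum_congr rfl fun j (_ : j ∈ Finset.univ) => hc j
    simpa [Finset.sum_sub_distrib, hcard] using this
  have hc_neg : ∀ j, c j = -1 := fun j => by linear_combination hsum - hc j
  rw [hx_eq, ← Finset.sum_neg_distrib]
  simp [hc_neg]

lemma eq_neg_sum_of_pairwise_eq_one_castSucc (hB : B.IsAlt) {n : ℕ} (hn0 : (n : R) = 0)
    {v : Fin (n + 1) → M} (hv : ∀ i j, i ≠ j → B (v i) (v j) = 1) (b : Basis (Fin n) R M)
    (hb : ⇑b = v ∘ Fin.castSucc) : v (Fin.last n) = -∑ i, b i := by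
  refine eq_neg_sum_of_pairwise_eq_one hB b (fun i j hij => ?_) (by simpa using hn0)
    fun j => ?_ <;> simp only [hb, Function.comp_apply]
  · exact hv _ _ (by simpa using hij)
  · exact hv _ _ (Fin.castSucc_lt_last j).ne'

end PairwiseOne

lemma Module.Basis.equiv_apply_apply_bilinForm {R M M' ι : Type*} [CommRing R]
    [AddCommGroup M] [Module R M] [AddCommGroup M'] [Module R M'] {B : BilinForm R M}
    {B' : BilinForm R M'} (b : Basis ι R M) (b' : Basis ι R M')
    (h : ∀ i j, B' (b' i) (b' j) = B (b i) (b j)) (x y : M) :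
    B' (b.equiv b' (Equiv.refl ι) x) (b.equiv b' (Equiv.refl ι) y) = B x y := by
  have hcomp : B'.compl₁₂ (b.equiv b' (Equiv.refl ι)).toLinearMap
      (b.equiv b' (Equiv.refl ι)).toLinearMap = B :=
    LinearMap.BilinForm.ext_basis b fun i j => by simpa using h i j
  exact LinearMap.congr_fun₂ hcomp x y

section FiniteDimensional

variable {K M : Type*} [Field K] [AddCommGroup M] [Module K M] [FiniteDimensional K M]
  {B : BilinForm K M} {n : ℕ}

lemma exists_basis_of_pairwise_eq_one (hB : B.IsAlt) (hn : finrank K M = n)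
    {v : Fin (n + 1) → M} (hv : ∀ i j, i ≠ j → B (v i) (v j) = 1) :
    ∃ b : Basis (Fin n) K M, ⇑b = v ∘ Fin.castSucc := by
  have hli : LinearIndependent K (v ∘ Fin.castSucc) :=
    linearIndependent_of_pairwise_eq_one hB (fun i j hij => hv _ _ (by simpa using hij))
      (x := v (Fin.last n)) fun i => hv _ _ (Fin.castSucc_lt_last i).ne
  exact ⟨basisOfLinearIndependentOfCardEqFinrank' _ hli (by simp [hn]),
    coe_basisOfLinearIndependentOfCardEqFinrank' ..⟩

lemma exists_isometry_of_pairwise_eq_one (hB : B.IsAlt) (hn : finrank K M = n)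
    (hn0 : (n : K) = 0) {v w : Fin (n + 1) → M} (hv : ∀ i j, i ≠ j → B (v i) (v j) = 1)
    (hw : ∀ i j, i ≠ j → B (w i) (w j) = 1) :
    ∃ A : M ≃ₗ[K] M, (∀ x y, B (A x) (A y) = B x y) ∧ ∀ i, A (v i) = w i := by
  obtain ⟨bv, hbv⟩ := exists_basis_of_pairwise_eq_one hB hn hv
  obtain ⟨bw, hbw⟩ := exists_basis_of_pairwise_eq_one hB hn hw
  let A := bv.equiv bw (Equiv.refl _)
  have hA : ∀ i : Fin n, A (v i.castSucc) = w i.castSucc := fun i => by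
    simpa [A, hbv, hbw] using bv.equiv_apply i bw (Equiv.refl _)
  refine ⟨A, bv.equiv_apply_apply_bilinForm bw fun i j => ?_, fun i => ?_⟩
  · simp only [hbv, hbw, Function.comp_apply]
    by_cases hij : i = j
    · simp [hij, hB.self_eq_zero]
    · rw [hv _ _ (by simpa using hij), hw _ _ (by simpa using hij)]
  · induction i using Fin.lastCases with
    | last =>
      rw [eq_neg_sum_of_pairwise_eq_one_castSucc hB hn0 hv bv hbv,
        eq_neg_sum_of_pairwise_eq_one_castSucc hB hn0 hw bw hbw, map_neg, map_sum]
      simp [hbv, hbw, hA]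
    | cast i => exact hA i

end FiniteDimensional

theorem stmt4_general (g : ℕ) (v w : Fin (2 * g + 1) → Fin (2 * g) → ZMod 2)
    (hvpair : ∀ i j, i ≠ j → sympPair g (v i) (v j) = 1)
    (hwpair : ∀ i j, i ≠ j → sympPair g (w i) (w j) = 1) :
    ∃ A : (Fin (2 * g) → ZMod 2) ≃ₗ[ZMod 2] (Fin (2 * g) → ZMod 2),
      (∀ x y, sympPair g (A x) (A y) = sympPair g x y) ∧ ∀ i, A (v i) = w i := by
  have hchar : ((2 * g : ℕ) : ZMod 2) = 0 := by
    simp [show (2 : ZMod 2) = 0 from rfl]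
  exact exists_isometry_of_pairwise_eq_one (sympForm_isAlt g) (finrank_fin_fun _) hchar
    hvpair hwpair

theorem stmt4 (g : ℕ) (v w : Fin (2 * g + 1) → Fin (2 * g) → ZMod 2)
    (hvnz : ∀ i, v i ≠ 0) (hwnz : ∀ i, w i ≠ 0)
    (hvpair : ∀ i j, i ≠ j → sympPair g (v i) (v j) = 1)
    (hwpair : ∀ i j, i ≠ j → sympPair g (w i) (w j) = 1) :
    ∃ A : (Fin (2 * g) → ZMod 2) ≃ₗ[ZMod 2] (Fin (2 * g) → ZMod 2),
      (∀ x y, sympPair g (A x) (A y) = sympPair g x y) ∧ ∀ i, A (v i) = w i :=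
  stmt4_general g v w hvpair hwpair
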